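/- Every simplicial full-dimensional polytope P ⊆ ℝ^d (i.e., every facet of P is a (d−1)-dimensional simplex, equivalently every facet contains exactly d vertices of P) has a vertex-facet assignment. -/

import Mathlib

/-- A polytope is the convex hull of a finite set of points. -/
def IsPolytope {V : Type*} [AddCommGroup V] [Module ℝ V] (P : Set V) : Prop :=
  ∃ S : Set V, S.Finite ∧ P = convexHull ℝ S

/-- A face of `Q` is a nonempty proper exposed face of `Q`. -/
def IsFaceOf {V : Type*} [NormedAddCommGroup V] [NormedSpace ℝ V] (Q F : Set V) : Prop :=
  IsExposed ℝ Q F ∧ F.Nonempty ∧ F ≠ Q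

/-- The dimension of a set: the dimension of its affine span. -/
noncomputable def polyDim {V : Type*} [NormedAddCommGroup V] [NormedSpace ℝ V]
    (Q : Set V) : ℕ :=
  Module.finrank ℝ (affineSpan ℝ Q).direction

/-- The facets of a full-dimensional polytope `P ⊆ V`: faces whose affine span has
dimension `dim V - 1`. -/
def ambientFacets {V : Type*} [NormedAddCommGroup V] [NormedSpace ℝ V]
    (P : Set V) : Set (Set V) :=
  {F | IsFaceOf P F ∧ polyDim F = Module.finrank ℝ V - 1}

/-- A vertex-facet assignment: an injective map from vertices (extreme points) to
non-incident facets, or an injective map from facets to non-incident vertices. -/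
def HasVFA {V : Type*} [NormedAddCommGroup V] [NormedSpace ℝ V] (P : Set V) : Prop :=
  (∃ f : (P.extremePoints ℝ) → (ambientFacets P), Function.Injective f ∧
      ∀ v, (v : V) ∉ (f v : Set V)) ∨
  (∃ g : (ambientFacets P) → (P.extremePoints ℝ), Function.Injective g ∧
      ∀ F : (ambientFacets P), (g F : V) ∉ (F : Set V))

/-!
A nonnegative affine functional on the vertices whose zero set does not yet span a facet can be
tilted about its zero set, `h₀ + t • h₁`, until it vanishes at a new vertex; repeating this, the
contact set of any supporting hyperplane lies in a facet. In particular every vertex lies in a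
facet, and for a vertex `v` of a facet `F` of a simplicial polytope, tilting `F` about the ridge
spanned by its other vertices gives a facet `F'` with `v ∉ F'` containing all other vertices of `F`.

Flipping a facet through `v` at each of its other `d - 1` vertices shows that every vertex lies in
at least `d` facets, so double counting incidences (each facet has exactly `d` vertices) gives
`#vertices ≤ #facets`. Hall's condition for matching vertices to non-incident facets follows: a set
of vertices inside a common facet `F` is matched injectively by the flips of `F`, and any other set
of vertices is non-incident to every facet.
-/

open Set Module

theorem exists_pos_add_mul_nonneg_of_finite {α : Type*} {s : Set α} (hs : s.Finite)
    {f g : α → ℝ} (hf : ∀ x ∈ s, 0 ≤ f x) (hfg : ∀ x ∈ s, g x < 0 → 0 < f x)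
    (hg : ∃ x ∈ s, g x < 0) :
    ∃ t > 0, (∀ x ∈ s, 0 ≤ f x + t * g x) ∧ ∃ x ∈ s, f x + t * g x = 0 ∧ 0 < f x := by
  obtain ⟨x₀, ⟨hx₀, hgx₀⟩, hmin⟩ :=
    Set.exists_min_image {x ∈ s | g x < 0} (fun x => f x / -g x) (hs.subset (sep_subset _ _)) hg
  have ht : 0 < f x₀ / -g x₀ := div_pos (hfg x₀ hx₀ hgx₀) (neg_pos.2 hgx₀)
  refine ⟨_, ht, fun x hx => ?_, x₀, hx₀, ?_, hfg x₀ hx₀ hgx₀⟩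
  · rcases lt_or_ge (g x) 0 with hgx | hgx
    · have := (le_div_iff₀ (neg_pos.2 hgx)).1 (hmin x ⟨hx, hgx⟩)
      linarith
    · exact add_nonneg (hf x hx) (mul_nonneg ht.le hgx)
  · field_simp [hgx₀.ne]
    ring

theorem AffineMap.apply_eq_of_mem_affineSpan {k V₁ P₁ V₂ P₂ : Type*} [Ring k]
    [AddCommGroup V₁] [Module k V₁] [AddTorsor V₁ P₁] [AddCommGroup V₂] [Module k V₂]
    [AddTorsor V₂ P₂] (f : P₁ →ᵃ[k] P₂) {s : Set P₁} {c : P₂} (hf : ∀ x ∈ s, f x = c)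
    {x : P₁} (hx : x ∈ affineSpan k s) : f x = c := by
  have hfx : f x ∈ affineSpan k (f '' s) := by
    rw [← AffineSubspace.map_span]
    exact AffineSubspace.mem_map_of_mem f hx
  rw [← AffineSubspace.mem_affineSpan_singleton (k := k)]
  exact affineSpan_mono k (by rintro _ ⟨y, hy, rfl⟩; exact hf y hy) hfx

theorem exists_affineMap_eq_zero_of_notMem_affineSpan {E : Type*} [AddCommGroup E] [Module ℝ E]
    {s : Set E} {u : E} (hu : u ∉ affineSpan ℝ s) :
    ∃ h : E →ᵃ[ℝ] ℝ, (∀ x ∈ s, h x = 0) ∧ h u = 1 := by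
  rcases s.eq_empty_or_nonempty with rfl | ⟨z, hz⟩
  · exact ⟨AffineMap.const ℝ E 1, by simp, rfl⟩
  have hdir : u - z ∉ (affineSpan ℝ s).direction := fun h => hu <| by
    simpa using AffineSubspace.vadd_mem_of_mem_direction h (subset_affineSpan ℝ s hz)
  obtain ⟨f, hfu, hf⟩ := Submodule.exists_dual_map_eq_bot_of_notMem hdir inferInstance
  refine ⟨(f (u - z))⁻¹ • (f.toAffineMap - AffineMap.const ℝ E (f z)), fun x hx => ?_, ?_⟩
  · have hxz : x - z ∈ (affineSpan ℝ s).direction := by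
      simpa using AffineSubspace.vsub_mem_direction (subset_affineSpan ℝ s hx)
        (subset_affineSpan ℝ s hz)
    have : f (x - z) = 0 := by
      simpa [hf] using Submodule.mem_map_of_mem (f := f) hxz
    simp [← map_sub, this]
  · simp [← map_sub, hfu]

theorem finrank_vectorSpan_lt_finrank_vectorSpan_insert {E : Type*} [AddCommGroup E] [Module ℝ E]
    [FiniteDimensional ℝ E] {s : Set E} {u : E} (hs : s.Nonempty) (hu : u ∉ affineSpan ℝ s) :
    finrank ℝ (vectorSpan ℝ s) < finrank ℝ (vectorSpan ℝ (insert u s)) := by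
  rw [← direction_affineSpan, ← direction_affineSpan]
  refine Submodule.finrank_lt_finrank_of_lt (AffineSubspace.direction_lt_of_nonempty ?_ ?_)
  · exact (affineSpan_mono ℝ (subset_insert u s)).lt_of_ne fun h =>
      hu (h ▸ subset_affineSpan ℝ _ (mem_insert u s))
  · exact hs.mono (subset_affineSpan ℝ s)

theorem notMem_affineSpan_sdiff_of_ncard_eq {E : Type*} [AddCommGroup E] [Module ℝ E]
    {s : Set E} (hs : s.Finite) (hcard : s.ncard = finrank ℝ (vectorSpan ℝ s) + 1)
    {u : E} (hu : u ∈ s) : u ∉ affineSpan ℝ (s \ {u}) := by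
  have := hs.fintype
  have hind : AffineIndependent ℝ ((↑) : s → E) := by
    refine (affineIndependent_iff_finrank_vectorSpan_eq ℝ _ ?_).2 (by rw [Subtype.range_coe])
    rw [← Nat.card_eq_fintype_card, Nat.card_coe_set_eq, hcard]
  simpa using hind.notMem_affineSpan_sdiff ⟨u, hu⟩ univ

section

variable {E : Type*} [NormedAddCommGroup E] [NormedSpace ℝ E] {P F : Set E}

def IsSimplicial (P : Set E) : Prop :=
  ∀ F ∈ ambientFacets P, (P.extremePoints ℝ ∩ F).ncard = finrank ℝ E

theorem IsPolytope.finite_extremePoints (hP : IsPolytope P) : (P.extremePoints ℝ).Finite := by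
  obtain ⟨S, hS, rfl⟩ := hP
  exact hS.subset extremePoints_convexHull_subset

theorem IsPolytope.convexHull_extremePoints_inter (hP : IsPolytope P) (hF : IsExposed ℝ P F) :
    convexHull ℝ (P.extremePoints ℝ ∩ F) = F := by
  obtain ⟨S, hS, rfl⟩ := id hP
  have hPc : IsCompact (convexHull ℝ S) := hS.isCompact_convexHull ℝ
  have hFc : IsCompact F := hPc.of_isClosed_subset (hF.isClosed hPc.isClosed) hF.subset
  have hFconv : Convex ℝ F := hF.convex (convex_convexHull ℝ S)
  refine (convexHull_min inter_subset_right hFconv).antisymm ?_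
  calc F = closure (convexHull ℝ (F.extremePoints ℝ)) :=
        (closure_convexHull_extremePoints hFc hFconv).symm
    _ ⊆ closure (convexHull ℝ ((convexHull ℝ S).extremePoints ℝ ∩ F)) :=
        closure_mono <| convexHull_mono fun x hx =>
          ⟨hF.isExtreme.extremePoints_subset_extremePoints hx, hx.1⟩
    _ = _ := (hP.finite_extremePoints.subset inter_subset_left).isClosed_convexHull ℝ |>.closure_eq

theorem IsPolytope.convexHull_extremePoints (hP : IsPolytope P) :
    convexHull ℝ (P.extremePoints ℝ) = P := by
  simpa [inter_eq_left.2 extremePoints_subset] using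
    hP.convexHull_extremePoints_inter (IsExposed.refl P)

theorem IsPolytope.finite_ambientFacets (hP : IsPolytope P) : (ambientFacets P).Finite :=
  (hP.finite_extremePoints.finite_subsets.image (convexHull ℝ)).subset fun _ hF =>
    ⟨_, inter_subset_left, hP.convexHull_extremePoints_inter hF.1.1⟩

theorem IsPolytope.finrank_vectorSpan_extremePoints_inter (hP : IsPolytope P)
    (hF : F ∈ ambientFacets P) :
    finrank ℝ (vectorSpan ℝ (P.extremePoints ℝ ∩ F)) = finrank ℝ E - 1 := by
  rw [← hF.2, polyDim]
  conv_rhs => rw [← hP.convexHull_extremePoints_inter hF.1.1, affineSpan_convexHull,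
    direction_affineSpan]

theorem IsPolytope.exists_extremePoint_notMem_affineSpan (hP : IsPolytope P)
    (hfull : affineSpan ℝ P = ⊤) {s : Set E} (hs : finrank ℝ (vectorSpan ℝ s) < finrank ℝ E) :
    ∃ u ∈ P.extremePoints ℝ, u ∉ affineSpan ℝ s := by
  by_contra! h
  have htop : affineSpan ℝ s = ⊤ := by
    rw [eq_top_iff, ← hfull, ← hP.convexHull_extremePoints, affineSpan_convexHull]
    exact affineSpan_le.2 h
  rw [← direction_affineSpan, htop, AffineSubspace.direction_top, finrank_top] at hs
  exact hs.false

theorem IsExposed.exists_affineMap_nonneg (hF : IsExposed ℝ P F) (hne : F.Nonempty) :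
    ∃ h : E →ᵃ[ℝ] ℝ, (∀ x ∈ P, 0 ≤ h x) ∧ ∀ x ∈ P, h x = 0 ↔ x ∈ F := by
  obtain ⟨l, rfl⟩ := hF hne
  obtain ⟨v, hvP, hv⟩ := hne
  refine ⟨AffineMap.const ℝ E (l v) - l.toLinearMap.toAffineMap, fun x hx => ?_, fun x hx => ?_⟩
  · simpa using hv x hx
  · simp only [AffineMap.coe_sub, AffineMap.coe_const, LinearMap.coe_toAffineMap,
      Pi.sub_apply, Function.const_apply, ContinuousLinearMap.coe_coe, sub_eq_zero, mem_sep_iff,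
      hx, true_and]
    exact ⟨fun h y hy => h ▸ hv y hy, fun h => (h v hvP).antisymm (hv x hx)⟩

theorem convexHull_inter_mem_ambientFacets [FiniteDimensional ℝ E] {V : Set E}
    {h : E →ᵃ[ℝ] ℝ} (hnn : ∀ u ∈ V, 0 ≤ h u) (hzero : ∃ z ∈ V, h z = 0)
    (hpos : ∃ w ∈ V, 0 < h w)
    (hdim : finrank ℝ E - 1 ≤ finrank ℝ (vectorSpan ℝ {u ∈ V | h u = 0})) :
    convexHull ℝ V ∩ {x | h x = 0} ∈ ambientFacets (convexHull ℝ V) := by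
  obtain ⟨z, hzV, hz⟩ := hzero
  obtain ⟨w, hwV, hw⟩ := hpos
  have hVP : V ⊆ convexHull ℝ V := subset_convexHull ℝ V
  have hnnP : ∀ x ∈ convexHull ℝ V, 0 ≤ h x := fun x hx =>
    convexHull_min hnn ((convex_Ici 0).affine_preimage h) hx
  have hlin : ∀ x y, h.linear y - h.linear x = h y - h x := fun x y => by
    rw [← map_sub]; simpa using h.linearMap_vsub y x
  have hexp : convexHull ℝ V ∩ {x | h x = 0} =
      (-h.linear.toContinuousLinearMap).toExposed (convexHull ℝ V) := by
    ext x
    simp only [ContinuousLinearMap.toExposed, mem_inter_iff, mem_ofPred_eq,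
      neg_apply, LinearMap.coe_toContinuousLinearMap', neg_le_neg_iff]
    refine and_congr_right fun hx => ⟨fun hx0 y hy => ?_, fun H => ?_⟩
    · linarith [hlin x y, hnnP y hy]
    · linarith [hlin x z, H z (hVP hzV), hnnP x hx]
  have hw' : w ∉ affineSpan ℝ (convexHull ℝ V ∩ {x | h x = 0}) := fun hmem =>
    hw.ne' (h.apply_eq_of_mem_affineSpan (fun x hx => hx.2) hmem)
  have hzS : z ∈ convexHull ℝ V ∩ {x | h x = 0} := ⟨hVP hzV, hz⟩
  refine ⟨⟨hexp ▸ ContinuousLinearMap.toExposed.isExposed, ⟨z, hzS⟩, fun heq => hw' ?_⟩, ?_⟩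
  · rw [heq]
    exact subset_affineSpan ℝ _ (hVP hwV)
  refine le_antisymm (Nat.le_sub_one_of_lt (Submodule.finrank_lt fun htop => hw' ?_)) ?_
  · rw [(AffineSubspace.direction_eq_top_iff_of_nonempty ⟨z, subset_affineSpan ℝ _ hzS⟩).1 htop]
    exact AffineSubspace.mem_top ℝ E w
  · rw [polyDim, direction_affineSpan]
    exact hdim.trans (Submodule.finrank_mono (vectorSpan_mono ℝ fun u hu => ⟨hVP hu.1, hu.2⟩))

theorem IsPolytope.exists_tilt [FiniteDimensional ℝ E] (hP : IsPolytope P)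
    (hfull : affineSpan ℝ P = ⊤) {h₀ : E →ᵃ[ℝ] ℝ} (hnn : ∀ u ∈ P.extremePoints ℝ, 0 ≤ h₀ u)
    (hne : {u ∈ P.extremePoints ℝ | h₀ u = 0}.Nonempty)
    (hdim : finrank ℝ (vectorSpan ℝ {u ∈ P.extremePoints ℝ | h₀ u = 0}) + 1 < finrank ℝ E) :
    ∃ h : E →ᵃ[ℝ] ℝ, (∀ u ∈ P.extremePoints ℝ, 0 ≤ h u) ∧ (∃ u ∈ P.extremePoints ℝ, 0 < h u) ∧
      {u ∈ P.extremePoints ℝ | h₀ u = 0} ⊆ {u ∈ P.extremePoints ℝ | h u = 0} ∧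
      finrank ℝ (vectorSpan ℝ {u ∈ P.extremePoints ℝ | h₀ u = 0}) <
        finrank ℝ (vectorSpan ℝ {u ∈ P.extremePoints ℝ | h u = 0}) := by
  set Z := {u ∈ P.extremePoints ℝ | h₀ u = 0}
  obtain ⟨u₁, hu₁, hu₁Z⟩ := hP.exists_extremePoint_notMem_affineSpan hfull (s := Z) (by omega)
  obtain ⟨u₀, hu₀, hu₀Z⟩ := hP.exists_extremePoint_notMem_affineSpan hfull (s := insert u₁ Z)
    ((finrank_vectorSpan_insert_le_set ℝ Z u₁).trans_lt hdim)
  obtain ⟨g, hgZ, hgu₀⟩ := exists_affineMap_eq_zero_of_notMem_affineSpan hu₀Z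
  have hgZ' : ∀ z ∈ Z, g z = 0 := fun z hz => hgZ z (mem_insert_of_mem u₁ hz)
  obtain ⟨t, -, ht, u, hu, hut, hu_pos⟩ :=
    exists_pos_add_mul_nonneg_of_finite hP.finite_extremePoints (f := h₀) (g := fun u => -g u) hnn
      (fun u hu hgu => (hnn u hu).lt_of_ne' fun h0 => by simp [hgZ' u ⟨hu, h0⟩] at hgu)
      ⟨u₀, hu₀, by simp [hgu₀]⟩
  have happ : ∀ x, (h₀ - t • g) x = h₀ x + t * -g x := fun x => by simp; ring
  have hZ : Z ⊆ {u ∈ P.extremePoints ℝ | (h₀ - t • g) u = 0} := fun z hz =>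
    ⟨hz.1, by simp [happ, hz.2, hgZ' z hz]⟩
  refine ⟨h₀ - t • g, fun x hx => happ x ▸ ht x hx, ⟨u₁, hu₁, ?_⟩, hZ, ?_⟩
  · rw [happ, hgZ u₁ (mem_insert u₁ Z), neg_zero, mul_zero, add_zero]
    exact (hnn u₁ hu₁).lt_of_ne' fun h0 => hu₁Z (subset_affineSpan ℝ Z ⟨hu₁, h0⟩)
  · have huZ : u ∉ affineSpan ℝ Z := fun hmem =>
      hu_pos.ne' (h₀.apply_eq_of_mem_affineSpan (fun z hz => hz.2) hmem)
    calc _ < finrank ℝ (vectorSpan ℝ (insert u Z)) :=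
          finrank_vectorSpan_lt_finrank_vectorSpan_insert hne huZ
      _ ≤ _ := Submodule.finrank_mono <| vectorSpan_mono ℝ <|
          insert_subset (show u ∈ {u ∈ P.extremePoints ℝ | (h₀ - t • g) u = 0} from
            ⟨hu, (happ u).trans hut⟩) hZ

theorem IsPolytope.exists_mem_ambientFacets_superset [FiniteDimensional ℝ E] (hP : IsPolytope P)
    (hfull : affineSpan ℝ P = ⊤) {h : E →ᵃ[ℝ] ℝ} (hnn : ∀ u ∈ P.extremePoints ℝ, 0 ≤ h u)
    (hne : {u ∈ P.extremePoints ℝ | h u = 0}.Nonempty)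
    (hpos : ∃ u ∈ P.extremePoints ℝ, 0 < h u) :
    ∃ F ∈ ambientFacets P, {u ∈ P.extremePoints ℝ | h u = 0} ⊆ F := by
  suffices ∀ n, ∀ h : E →ᵃ[ℝ] ℝ, (∀ u ∈ P.extremePoints ℝ, 0 ≤ h u) →
      {u ∈ P.extremePoints ℝ | h u = 0}.Nonempty → (∃ u ∈ P.extremePoints ℝ, 0 < h u) →
      finrank ℝ E - 1 ≤ n + finrank ℝ (vectorSpan ℝ {u ∈ P.extremePoints ℝ | h u = 0}) →
      ∃ F ∈ ambientFacets P, {u ∈ P.extremePoints ℝ | h u = 0} ⊆ F from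
    this _ h hnn hne hpos (Nat.le_add_right _ _)
  intro n
  induction n with
  | zero =>
    intro h hnn hne hpos hdim
    have hF := convexHull_inter_mem_ambientFacets hnn hne hpos (by simpa using hdim)
    rw [hP.convexHull_extremePoints] at hF
    exact ⟨_, hF, fun u hu => ⟨extremePoints_subset hu.1, hu.2⟩⟩
  | succ n ih =>
    intro h hnn hne hpos hdim
    by_cases hcodim : finrank ℝ E - 1 ≤
        finrank ℝ (vectorSpan ℝ {u ∈ P.extremePoints ℝ | h u = 0})
    · exact ih h hnn hne hpos (by omega)
    obtain ⟨h', hnn', hpos', hsub, hlt⟩ := hP.exists_tilt hfull hnn hne (by omega)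
    obtain ⟨F, hF, hF'⟩ := ih h' hnn' (hne.mono hsub) hpos' (by omega)
    exact ⟨F, hF, hsub.trans hF'⟩

theorem IsPolytope.exists_mem_ambientFacets [FiniteDimensional ℝ E] (hP : IsPolytope P)
    (hfull : affineSpan ℝ P = ⊤) (hd : 0 < finrank ℝ E) {v : E} (hv : v ∈ P.extremePoints ℝ) :
    ∃ F ∈ ambientFacets P, v ∈ F := by
  have hPconv : Convex ℝ P := hP.convexHull_extremePoints ▸ convex_convexHull ℝ _
  have hvK : v ∉ convexHull ℝ (P.extremePoints ℝ \ {v}) := fun hmem =>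
    (hPconv.mem_extremePoints_iff_mem_sdiff_convexHull_sdiff.1 hv).2
      (convexHull_mono (sdiff_subset_sdiff_left extremePoints_subset) hmem)
  obtain ⟨l, s, hlv, hl⟩ := geometric_hahn_banach_point_closed (convex_convexHull ℝ _)
    ((hP.finite_extremePoints.subset sdiff_subset).isClosed_convexHull ℝ) hvK
  set h : E →ᵃ[ℝ] ℝ := l.toLinearMap.toAffineMap - AffineMap.const ℝ E (l v)
  have hhv : h v = 0 := by simp [h]
  have hpos : ∀ u ∈ P.extremePoints ℝ, u ≠ v → 0 < h u := fun u hu huv => by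
    have := hl u (subset_convexHull ℝ _ ⟨hu, huv⟩)
    simp only [h, AffineMap.coe_sub, AffineMap.coe_const, LinearMap.coe_toAffineMap,
      Pi.sub_apply, Function.const_apply, ContinuousLinearMap.coe_coe]
    linarith
  obtain ⟨w, hw, hwv⟩ := hP.exists_extremePoint_notMem_affineSpan hfull (s := {v})
    (by rwa [vectorSpan_singleton, finrank_bot])
  obtain ⟨F, hF, hsub⟩ := hP.exists_mem_ambientFacets_superset hfull (h := h)
    (fun u hu => (eq_or_ne u v).elim (fun huv => (huv ▸ hhv).ge) fun huv => (hpos u hu huv).le)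
    ⟨v, hv, hhv⟩ ⟨w, hw, hpos w hw fun hwv' => hwv (hwv' ▸ mem_affineSpan ℝ rfl)⟩
  exact ⟨F, hF, hsub ⟨hv, hhv⟩⟩

theorem IsPolytope.exists_tilt_off_vertex [FiniteDimensional ℝ E] (hP : IsPolytope P)
    (hfull : affineSpan ℝ P = ⊤) (hs : IsSimplicial P) (hF : F ∈ ambientFacets P) {v : E}
    (hv : v ∈ P.extremePoints ℝ ∩ F) :
    ∃ h : E →ᵃ[ℝ] ℝ, (∀ u ∈ P.extremePoints ℝ, 0 ≤ h u) ∧ 0 < h v ∧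
      (∀ a ∈ (P.extremePoints ℝ ∩ F) \ {v}, h a = 0) ∧
      ∃ u ∈ P.extremePoints ℝ, u ∉ F ∧ h u = 0 := by
  have hdimF := hP.finrank_vectorSpan_extremePoints_inter hF
  set VF := P.extremePoints ℝ ∩ F
  have hVF : VF.Finite := hP.finite_extremePoints.subset inter_subset_left
  have hd : 0 < finrank ℝ E := hs F hF ▸ (ncard_pos hVF).2 ⟨v, hv⟩
  obtain ⟨h₀, hnn₀, hzero₀⟩ := hF.1.1.exists_affineMap_nonneg hF.1.2.1
  obtain ⟨u₀, hu₀, hu₀F⟩ := hP.exists_extremePoint_notMem_affineSpan hfull (s := VF) (by omega)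
  obtain ⟨g₁, hg₁, hg₁u₀⟩ := exists_affineMap_eq_zero_of_notMem_affineSpan hu₀F
  obtain ⟨g₂, hg₂, hg₂v⟩ := exists_affineMap_eq_zero_of_notMem_affineSpan <|
    notMem_affineSpan_sdiff_of_ncard_eq hVF (by rw [hs F hF, hdimF]; omega) hv
  set h₁ := g₂ - (|g₂ u₀| + 1) • g₁
  have hh₁ : ∀ u ∈ VF, h₁ u = g₂ u := fun u hu => by simp [h₁, hg₁ u hu]
  have hh₁A : ∀ a ∈ VF \ {v}, h₁ a = 0 := fun a ha => (hh₁ a ha.1).trans (hg₂ a ha)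
  have hh₁v : h₁ v = 1 := (hh₁ v hv).trans hg₂v
  have hh₁u₀ : h₁ u₀ < 0 := by
    simp only [h₁, AffineMap.coe_sub, AffineMap.coe_smul, Pi.sub_apply, Pi.smul_apply, hg₁u₀,
      smul_eq_mul, mul_one]
    linarith [le_abs_self (g₂ u₀)]
  have hmemF : ∀ u ∈ P.extremePoints ℝ, h₀ u = 0 → u ∈ VF := fun u hu h0 =>
    ⟨hu, (hzero₀ u (extremePoints_subset hu)).1 h0⟩
  obtain ⟨t, ht0, ht, u₁, hu₁, hu₁t, hu₁pos⟩ :=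
    exists_pos_add_mul_nonneg_of_finite hP.finite_extremePoints (f := h₀) (g := h₁)
      (fun u hu => hnn₀ u (extremePoints_subset hu))
      (fun u hu hneg => (hnn₀ u (extremePoints_subset hu)).lt_of_ne' fun h0 => by
        obtain rfl | huv := eq_or_ne u v
        · linarith
        · linarith [hh₁A u ⟨hmemF u hu h0, huv⟩])
      ⟨u₀, hu₀, hh₁u₀⟩
  have happ : ∀ x, (h₀ + t • h₁) x = h₀ x + t * h₁ x := fun x => by simp
  refine ⟨h₀ + t • h₁, fun u hu => happ u ▸ ht u hu, ?_, fun a ha => ?_,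
    ⟨u₁, hu₁, fun hu₁F => hu₁pos.ne' ((hzero₀ u₁ (extremePoints_subset hu₁)).2 hu₁F), ?_⟩⟩
  · rw [happ, (hzero₀ v (extremePoints_subset hv.1)).2 hv.2, hh₁v]
    linarith
  · rw [happ, (hzero₀ a (extremePoints_subset ha.1.1)).2 ha.1.2, hh₁A a ha, mul_zero, add_zero]
  · rw [happ, hu₁t]

theorem IsPolytope.exists_flip [FiniteDimensional ℝ E] (hP : IsPolytope P)
    (hfull : affineSpan ℝ P = ⊤) (hs : IsSimplicial P) (hF : F ∈ ambientFacets P) {v : E}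
    (hv : v ∈ P.extremePoints ℝ ∩ F) :
    ∃ F' ∈ ambientFacets P, v ∉ F' ∧ (P.extremePoints ℝ ∩ F) \ {v} ⊆ F' := by
  obtain ⟨h, hnn, hv_pos, hA, u₁, hu₁, hu₁F, hu₁0⟩ := hP.exists_tilt_off_vertex hfull hs hF hv
  obtain ⟨F', hF', hsub⟩ :=
    hP.exists_mem_ambientFacets_superset hfull hnn ⟨u₁, hu₁, hu₁0⟩ ⟨v, hv.1, hv_pos⟩
  have hAF' : (P.extremePoints ℝ ∩ F) \ {v} ⊆ F' := fun a ha => hsub ⟨ha.1.1, hA a ha⟩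
  refine ⟨F', hF', fun hvF' => ?_, hAF'⟩
  -- `F'` has only `d` vertices, and `u₁` with the `d - 1` vertices of `F` other than `v` fill it.
  have hu₁A : u₁ ∉ (P.extremePoints ℝ ∩ F) \ {v} := fun h => hu₁F h.1.2
  have hVF : 0 < (P.extremePoints ℝ ∩ F).ncard :=
    (ncard_pos (hP.finite_extremePoints.subset inter_subset_left)).2 ⟨v, hv⟩
  have heq : insert u₁ ((P.extremePoints ℝ ∩ F) \ {v}) = P.extremePoints ℝ ∩ F' := by
    refine eq_of_subset_of_ncard_le (insert_subset ⟨hu₁, hsub ⟨hu₁, hu₁0⟩⟩ fun a ha =>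
      ⟨ha.1.1, hAF' ha⟩) ?_ (hP.finite_extremePoints.subset inter_subset_left)
    rw [ncard_insert_of_notMem hu₁A
      (hP.finite_extremePoints.subset (sdiff_subset.trans inter_subset_left)),
      ncard_sdiff_singleton_of_mem hv, hs F hF, hs F' hF'] at *
    omega
  obtain rfl | hvA := (heq ▸ ⟨hv.1, hvF'⟩ : v ∈ insert u₁ ((P.extremePoints ℝ ∩ F) \ {v}))
  · exact hu₁F hv.2
  · exact hvA.2 rfl

theorem IsPolytope.exists_injOn_flip [FiniteDimensional ℝ E] (hP : IsPolytope P)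
    (hfull : affineSpan ℝ P = ⊤) (hs : IsSimplicial P) (hF : F ∈ ambientFacets P) :
    ∃ φ : E → ambientFacets P, InjOn φ (P.extremePoints ℝ ∩ F) ∧
      ∀ w ∈ P.extremePoints ℝ ∩ F, w ∉ (φ w : Set E) ∧ (P.extremePoints ℝ ∩ F) \ {w} ⊆ φ w := by
  have : Nonempty (ambientFacets P) := ⟨⟨F, hF⟩⟩
  have hflip : ∀ w ∈ P.extremePoints ℝ ∩ F, ∃ F' : ambientFacets P,
      w ∉ (F' : Set E) ∧ (P.extremePoints ℝ ∩ F) \ {w} ⊆ F' := fun w hw => by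
    obtain ⟨F', hF', h⟩ := hP.exists_flip hfull hs hF hw
    exact ⟨⟨F', hF'⟩, h⟩
  choose! φ hφ using hflip
  refine ⟨φ, fun x hx y hy hxy => ?_, hφ⟩
  by_contra hne
  exact (hφ y hy).1 (hxy ▸ (hφ x hx).2 ⟨hy, Ne.symm hne⟩)

theorem IsPolytope.finrank_le_ncard_ambientFacets_mem [FiniteDimensional ℝ E] (hP : IsPolytope P)
    (hfull : affineSpan ℝ P = ⊤) (hs : IsSimplicial P) (hd : 0 < finrank ℝ E) {v : E}
    (hv : v ∈ P.extremePoints ℝ) : finrank ℝ E ≤ {F ∈ ambientFacets P | v ∈ F}.ncard := by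
  obtain ⟨F₀, hF₀, hvF₀⟩ := hP.exists_mem_ambientFacets hfull hd hv
  obtain ⟨φ, hφinj, hφ⟩ := hP.exists_injOn_flip hfull hs hF₀
  set A := (P.extremePoints ℝ ∩ F₀) \ {v} with hAdef
  have hAfin : A.Finite := hP.finite_extremePoints.subset (sdiff_subset.trans inter_subset_left)
  have hinj : InjOn (fun w => (φ w : Set E)) A :=
    (Subtype.val_injective.comp_injOn hφinj).mono sdiff_subset
  have hF₀A : F₀ ∉ (fun w => (φ w : Set E)) '' A := by
    rintro ⟨w, hw, hwF₀⟩
    exact (hφ w hw.1).1 (by rw [show (φ w : Set E) = F₀ from hwF₀]; exact hw.1.2)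
  calc finrank ℝ E = (insert F₀ ((fun w => (φ w : Set E)) '' A)).ncard := by
        rw [ncard_insert_of_notMem hF₀A (hAfin.image _), hinj.ncard_image, hAdef,
          ncard_sdiff_singleton_of_mem (mem_inter hv hvF₀), hs F₀ hF₀]
        omega
    _ ≤ _ := by
      refine ncard_le_ncard (insert_subset ⟨hF₀, hvF₀⟩ ?_)
        (hP.finite_ambientFacets.subset (sep_subset _ _))
      rintro _ ⟨w, hw, rfl⟩
      exact ⟨(φ w).2, (hφ w hw.1).2 ⟨⟨hv, hvF₀⟩, fun h => hw.2 h.symm⟩⟩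

theorem IsPolytope.ncard_extremePoints_le_ncard_ambientFacets [FiniteDimensional ℝ E]
    (hP : IsPolytope P) (hfull : affineSpan ℝ P = ⊤) (hs : IsSimplicial P)
    (hd : 0 < finrank ℝ E) : (P.extremePoints ℝ).ncard ≤ (ambientFacets P).ncard := by
  classical
  have hV := hP.finite_extremePoints
  have hF := hP.finite_ambientFacets
  rw [ncard_eq_toFinset_card _ hV, ncard_eq_toFinset_card _ hF]
  refine Nat.le_of_mul_le_mul_right (Finset.card_mul_le_card_mul (fun v F => v ∈ F)
    (fun v hv => ?_) (fun F hF' => ?_)) hd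
  · rw [← ncard_coe_finset]
    convert hP.finrank_le_ncard_ambientFacets_mem hfull hs hd (hV.mem_toFinset.1 hv) using 2
    ext F
    simp [Finset.bipartiteAbove]
  · rw [← ncard_coe_finset, ← hs F (hF.mem_toFinset.1 hF')]
    apply le_of_eq
    congr 1
    ext v
    simp [Finset.bipartiteBelow, and_comm]

open Classical in
theorem IsPolytope.card_le_card_ambientFacets_notMem [FiniteDimensional ℝ E]
    [Fintype (ambientFacets P)] (hP : IsPolytope P) (hfull : affineSpan ℝ P = ⊤)
    (hs : IsSimplicial P) (hd : 0 < finrank ℝ E) (A : Finset (P.extremePoints ℝ)) :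
    A.card ≤
      (Finset.univ.filter fun F : ambientFacets P => ∃ a ∈ A, (a : E) ∉ (F : Set E)).card := by
  by_cases hA : ∃ F₀ ∈ ambientFacets P, ∀ a ∈ A, (a : E) ∈ F₀
  · obtain ⟨F₀, hF₀, hAF₀⟩ := hA
    obtain ⟨φ, hφinj, hφ⟩ := hP.exists_injOn_flip hfull hs hF₀
    have hAF : ∀ a ∈ A, (a : E) ∈ P.extremePoints ℝ ∩ F₀ := fun a ha => ⟨a.2, hAF₀ a ha⟩
    refine Finset.card_le_card_of_injOn (fun a => φ a) (fun a ha => ?_)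
      fun a ha b hb hab => Subtype.ext (hφinj (hAF a ha) (hAF b hb) hab)
    simp only [Finset.coe_filter, Finset.mem_univ, true_and, mem_ofPred_eq]
    exact ⟨a, ha, (hφ a (hAF a ha)).1⟩
  · push Not at hA
    have := hP.finite_extremePoints.fintype
    rw [Finset.filter_true_of_mem fun (F : ambientFacets P) _ => hA F F.2]
    calc A.card ≤ Fintype.card (P.extremePoints ℝ) := A.card_le_univ
      _ = (P.extremePoints ℝ).ncard := by rw [← Nat.card_eq_fintype_card, Nat.card_coe_set_eq]
      _ ≤ (ambientFacets P).ncard := hP.ncard_extremePoints_le_ncard_ambientFacets hfull hs hd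
      _ = _ := by rw [← Nat.card_coe_set_eq, Nat.card_eq_fintype_card, Finset.card_univ]

theorem IsFaceOf.nontrivial (hF : IsFaceOf P F) : Nontrivial E := by
  by_contra hE
  rw [not_nontrivial_iff_subsingleton] at hE
  obtain ⟨x, hx⟩ := hF.2.1
  exact hF.2.2 (hF.1.subset.antisymm fun y _ => Subsingleton.elim x y ▸ hx)

theorem IsPolytope.hasVFA_of_isSimplicial [FiniteDimensional ℝ E] (hP : IsPolytope P)
    (hfull : affineSpan ℝ P = ⊤) (hs : IsSimplicial P) : HasVFA P := by
  classical
  rcases (finrank ℝ E).eq_zero_or_pos with hd | hd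
  · have : IsEmpty (ambientFacets P) := ⟨fun F => by
      have := F.2.1.nontrivial
      exact finrank_pos.ne' hd⟩
    exact Or.inr ⟨isEmptyElim, Function.injective_of_subsingleton _, isEmptyElim⟩
  · have := hP.finite_ambientFacets.fintype
    exact Or.inl <| (Fintype.all_card_le_filter_rel_iff_exists_injective _).1
      (hP.card_le_card_ambientFacets_notMem hfull hs hd)

end

/-- Every simplicial full-dimensional polytope (every facet contains
exactly `d` vertices of `P`) has a vertex-facet assignment. -/
theorem vfa_of_simplicial {d : ℕ} (P : Set (Fin d → ℝ))
    (hP : IsPolytope P) (hfull : affineSpan ℝ P = ⊤)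
    (hsimplicial : ∀ F ∈ ambientFacets P, (P.extremePoints ℝ ∩ F).ncard = d) :
    HasVFA P :=
  hP.hasVFA_of_isSimplicial hfull fun F hF => by rw [hsimplicial F hF, finrank_fin_fun]
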